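/- (Correctness of the system encoding θ.) Let T = (S, S₀, Δ, AP, Λ) be a transition system with a single initial state S₀ = {s₀}, and let π be a path variable. Consider traces τ over the proposition set {q_π | q ∈ AP ∪ S} and the LTL-with-past formula θ(π,T) = ◇⁻( (¬Y⊤) ∧ (s₀)_π ∧ □ ⋀_{s ∈ S} [ s_π → ( ⋀_{t ∈ S∖{s}} ¬t_π ∧ ⋁_{t ∈ Δ(s)} ( X t_π ∧ ⋀_{p ∈ Λ(s,t)} p_π ∧ ⋀_{p ∈ AP∖Λ(s,t)} ¬p_π ) ) ] ). Then for every trace τ and every time point i: τ,i ⊨ θ(π,T) if and only if there exists a path ρ of T with ρ[0] = s₀ such that for all j ∈ ℕ, {s ∈ S | s_π ∈ τ[j]} = {ρ[j]} and {p ∈ AP | p_π ∈ τ[j]} = Λ(ρ[j], ρ[j+1]); in particular, the AP-part of the π-indexed propositions of τ is then exactly a trace in Π(T). -/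

import Mathlib

/-- Syntax of LTL with past over atomic propositions `Q` (with primitive truth `tt`). -/
inductive LTL (Q : Type*) where
  | tt : LTL Q
  | atom : Q → LTL Q
  | neg : LTL Q → LTL Q
  | or : LTL Q → LTL Q → LTL Q
  | next : LTL Q → LTL Q
  | prev : LTL Q → LTL Q
  | untl : LTL Q → LTL Q → LTL Q
  | since : LTL Q → LTL Q → LTL Q

namespace LTL

variable {Q : Type*}

/-- Semantics of LTL with past on a trace `τ` at time point `i`. -/
def sat : LTL Q → (ℕ → Set Q) → ℕ → Prop
  | .tt, _, _ => True
  | .atom p, τ, i => p ∈ τ i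
  | .neg φ, τ, i => ¬ sat φ τ i
  | .or φ ψ, τ, i => sat φ τ i ∨ sat ψ τ i
  | .next φ, τ, i => sat φ τ (i + 1)
  | .prev φ, τ, i => 0 < i ∧ sat φ τ (i - 1)
  | .untl φ ψ, τ, i => ∃ k, i ≤ k ∧ sat ψ τ k ∧ ∀ j, i ≤ j → j < k → sat φ τ j
  | .since φ ψ, τ, i => ∃ g, g ≤ i ∧ sat ψ τ g ∧ ∀ h, g ≤ h → h < i → sat φ τ h

/-- Derived conjunction. -/
def and (φ ψ : LTL Q) : LTL Q := .neg (.or (.neg φ) (.neg ψ))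

/-- Derived implication. -/
def impl (φ ψ : LTL Q) : LTL Q := .or (.neg φ) ψ

/-- Derived biimplication `φ ↔ ψ`. -/
def biim (φ ψ : LTL Q) : LTL Q := and (impl φ ψ) (impl ψ φ)

/-- Derived exclusive or `φ ↮ ψ`. -/
def niff (φ ψ : LTL Q) : LTL Q := .neg (biim φ ψ)

/-- Derived `Once` operator `◇⁻`. -/
def once (φ : LTL Q) : LTL Q := .since .tt φ

/-- Derived `Historically` operator `□⁻`. -/
def hist (φ : LTL Q) : LTL Q := .neg (once (.neg φ))

/-- Derived `Globally` operator `□`. -/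
def glob (φ : LTL Q) : LTL Q := .neg (.untl .tt (.neg φ))

/-- Finite conjunction. -/
def bigAnd (l : List (LTL Q)) : LTL Q := l.foldr and .tt

/-- Finite disjunction. -/
def bigOr (l : List (LTL Q)) : LTL Q := l.foldr .or (.neg .tt)

end LTL

/-- `π =_A π′` : agreement on `A` at every time point. -/
def agreeOn {AP : Type*} (A : Set AP) (π π' : ℕ → Set AP) : Prop :=
  ∀ i, π i ∩ A = π' i ∩ A

/-- `π ⊕_A π′` : trace-wide symmetric difference restricted to `A`. -/
def symDiff {AP : Type*} (A : Set AP) (π π' : ℕ → Set AP) : Set (AP × ℕ) :=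
  { q | q.1 ∈ A ∧ q.1 ∈ (π q.2 \ π' q.2) ∪ (π' q.2 \ π q.2) }

/-- `π′ ≤^A_{base} π″` : `π′` is at least as similar to `base` as `π″`, over `A`. -/
def simLE {AP : Type*} (A : Set AP) (base π' π'' : ℕ → Set AP) : Prop :=
  symDiff A π' base ⊆ symDiff A π'' base

/-- A finite-state transition system with `Finset`-valued data, as used in the encoding. -/
structure FinTransSys (S AP : Type) where
  init : Finset S
  delta : S → Finset S
  delta_nonempty : ∀ s, (delta s).Nonempty
  label : S → S → Finset AP

/-- `Π(T)`: the set of traces of initial paths of a finite transition system. -/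
def FinTransSys.Traces {S AP : Type} (T : FinTransSys S AP) : Set (ℕ → Set AP) :=
  { π | ∃ ρ : ℕ → S, ρ 0 ∈ T.init ∧ (∀ i, ρ (i + 1) ∈ T.delta (ρ i)) ∧
      ∀ i, π i = ↑(T.label (ρ i) (ρ (i + 1))) }

/-- The system encoding `θ(π, T)` for a single path variable `π`: propositions `q_π` for
`q ∈ AP ∪ S` are modeled by the sum type `AP ⊕ S`. -/
noncomputable def theta {S AP : Type} [Fintype S] [Fintype AP] [DecidableEq S] [DecidableEq AP]
    (T : FinTransSys S AP) (s₀ : S) : LTL (AP ⊕ S) :=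
  LTL.once (LTL.and (LTL.neg (LTL.prev LTL.tt))
    (LTL.and (LTL.atom (Sum.inr s₀))
      (LTL.glob (LTL.bigAnd ((Finset.univ : Finset S).toList.map fun s =>
        LTL.impl (LTL.atom (Sum.inr s))
          (LTL.and
            (LTL.bigAnd (((Finset.univ : Finset S) \ {s}).toList.map fun u =>
              LTL.neg (LTL.atom (Sum.inr u))))
            (LTL.bigOr ((T.delta s).toList.map fun u =>
              LTL.and (LTL.next (LTL.atom (Sum.inr u)))
                (LTL.and
                  (LTL.bigAnd ((T.label s u).toList.map fun p =>
                    LTL.atom (Sum.inl p)))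
                  (LTL.bigAnd (((T.label s u)ᶜ).toList.map fun p =>
                    LTL.neg (LTL.atom (Sum.inl p)))))))))))))


/-!
Since `¬Y⊤` holds only at time `0`, `θ` holds at some time point iff its body holds at `0`.
There the `□`-conjunct says that at every time `k`, the state propositions true at `k` are at most
one state `s`, and some successor `u ∈ Δ(s)` is true at `k + 1` while the `AP` part at `k` is
exactly `Λ(s, u)`. Starting from `s₀`, induction shows that some state is true at every time; these
states form the path.
-/

namespace LTL

variable {Q : Type*} {τ : ℕ → Set Q} {i : ℕ}

@[simp]
theorem sat_and {φ ψ : LTL Q} : sat (and φ ψ) τ i ↔ sat φ τ i ∧ sat ψ τ i := by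
  simp only [and, sat, not_or, not_not]

@[simp]
theorem sat_impl {φ ψ : LTL Q} : sat (impl φ ψ) τ i ↔ (sat φ τ i → sat ψ τ i) := by
  simp only [impl, sat, imp_iff_not_or]

@[simp]
theorem sat_bigAnd {l : List (LTL Q)} : sat (bigAnd l) τ i ↔ ∀ φ ∈ l, sat φ τ i := by
  induction l with
  | nil => simp [bigAnd, sat]
  | cons φ l ih => simp_all [bigAnd]

@[simp]
theorem sat_bigOr {l : List (LTL Q)} : sat (bigOr l) τ i ↔ ∃ φ ∈ l, sat φ τ i := by
  induction l with
  | nil => simp [bigOr, sat]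
  | cons φ l ih => simp_all [bigOr, sat]

@[simp]
theorem sat_glob {φ : LTL Q} : sat (glob φ) τ i ↔ ∀ k, i ≤ k → sat φ τ k := by
  simp [glob, sat]

theorem sat_neg_prev_tt : sat (neg (prev tt)) τ i ↔ i = 0 := by
  simp [sat]

theorem sat_once_and_neg_prev_tt {φ : LTL Q} :
    sat (once (and (neg (prev tt)) φ)) τ i ↔ sat φ τ 0 := by
  rw [once, sat]
  constructor
  · rintro ⟨g, -, hg, -⟩
    rw [sat_and, sat_neg_prev_tt] at hg
    exact hg.1 ▸ hg.2
  · exact fun h => ⟨0, i.zero_le, sat_and.2 ⟨sat_neg_prev_tt.2 rfl, h⟩, fun _ _ _ => trivial⟩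

end LTL

theorem Finset.setOf_eq_coe_iff {α : Type*} {P : α → Prop} {L : Finset α} :
    { a | P a } = ↑L ↔ (∀ a ∈ L, P a) ∧ ∀ a, P a → a ∈ L := by
  simp only [Set.ext_iff, Set.mem_ofPred_eq, Finset.mem_coe, iff_def, forall_and, and_comm]

theorem sat_theta_iff {S AP : Type} [Fintype S] [Fintype AP] [DecidableEq S] [DecidableEq AP]
    (T : FinTransSys S AP) (s₀ : S) (τ : ℕ → Set (AP ⊕ S)) (i : ℕ) :
    LTL.sat (theta T s₀) τ i ↔
      Sum.inr s₀ ∈ τ 0 ∧ ∀ k s, Sum.inr s ∈ τ k →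
        { u | Sum.inr u ∈ τ k } ⊆ {s} ∧
        ∃ u ∈ T.delta s, Sum.inr u ∈ τ (k + 1) ∧ { p | Sum.inl p ∈ τ k } = ↑(T.label s u) := by
  simp [theta, LTL.sat_once_and_neg_prev_tt, LTL.sat, Finset.setOf_eq_coe_iff, not_imp_not,
    Set.subset_singleton_iff]

theorem FinTransSys.exists_path_iff_stepwise {S AP : Type} (T : FinTransSys S AP) (s₀ : S)
    (σ : ℕ → Set S) (lab : ℕ → Set AP) :
    (s₀ ∈ σ 0 ∧ ∀ k, ∀ s ∈ σ k, σ k ⊆ {s} ∧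
        ∃ u ∈ T.delta s, u ∈ σ (k + 1) ∧ lab k = ↑(T.label s u)) ↔
      ∃ ρ : ℕ → S, ρ 0 = s₀ ∧ (∀ j, ρ (j + 1) ∈ T.delta (ρ j)) ∧
        ∀ j, σ j = {ρ j} ∧ lab j = ↑(T.label (ρ j) (ρ (j + 1))) := by
  constructor
  · rintro ⟨h0, hstep⟩
    have hne : ∀ k, (σ k).Nonempty := by
      intro k
      induction k with
      | zero => exact ⟨s₀, h0⟩
      | succ k ih =>
        obtain ⟨s, hs⟩ := ih
        obtain ⟨-, u, -, hu, -⟩ := hstep k s hs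
        exact ⟨u, hu⟩
    choose ρ hρ using hne
    have hσ : ∀ k, σ k = {ρ k} := fun k =>
      (hstep k _ (hρ k)).1.antisymm (Set.singleton_subset_iff.2 (hρ k))
    have hsucc : ∀ j, ρ (j + 1) ∈ T.delta (ρ j) ∧ lab j = ↑(T.label (ρ j) (ρ (j + 1))) := by
      intro j
      obtain ⟨-, u, hu, huσ, hlab⟩ := hstep j _ (hρ j)
      rw [hσ, Set.mem_singleton_iff] at huσ
      exact huσ ▸ ⟨hu, hlab⟩
    refine ⟨ρ, ?_, fun j => (hsucc j).1, fun j => ⟨hσ j, (hsucc j).2⟩⟩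
    simpa [hσ, eq_comm] using h0
  · rintro ⟨ρ, rfl, hδ, hσ⟩
    refine ⟨by simp [hσ], fun k s hs => ?_⟩
    rw [(hσ k).1, Set.mem_singleton_iff] at hs
    subst hs
    exact ⟨(hσ k).1.subset, ρ (k + 1), hδ k, by simp [hσ], (hσ k).2⟩

/-- correctness of the system encoding `θ`: a trace over the augmented
propositions satisfies `θ(π,T)` iff its state part traces an initial path of `T` and its
`AP` part is the corresponding trace; in particular the `AP` part is then a trace in `Π(T)`. -/
theorem theta_encoding_correct {S AP : Type} [Fintype S] [Fintype AP]
    [DecidableEq S] [DecidableEq AP]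
    (T : FinTransSys S AP) (s₀ : S) (hinit : T.init = {s₀})
    (τ : ℕ → Set (AP ⊕ S)) (i : ℕ) :
    (LTL.sat (theta T s₀) τ i ↔
      ∃ ρ : ℕ → S, ρ 0 = s₀ ∧ (∀ j, ρ (j + 1) ∈ T.delta (ρ j)) ∧
        ∀ j, ({ s : S | Sum.inr s ∈ τ j } = {ρ j} ∧
          { p : AP | Sum.inl p ∈ τ j } = ↑(T.label (ρ j) (ρ (j + 1))))) ∧
    (LTL.sat (theta T s₀) τ i →
      (fun j => { p : AP | Sum.inl p ∈ τ j }) ∈ T.Traces) := by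
  have hpath := (sat_theta_iff T s₀ τ i).trans (T.exists_path_iff_stepwise s₀
    (fun k => { s | Sum.inr s ∈ τ k }) (fun k => { p | Sum.inl p ∈ τ k }))
  refine ⟨hpath, fun hsat => ?_⟩
  obtain ⟨ρ, h0, hδ, hτ⟩ := hpath.1 hsat
  exact ⟨ρ, by simp [hinit, h0], hδ, fun j => (hτ j).2⟩
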